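/- If ℓ = t(n−1) + 1 for a non-negative integer t and n ≥ 2, then for every tree T on n vertices, the 2-color Ramsey number satisfies r(K_{1,ℓ}, T) = ℓ + n − 1. -/

import Mathlib

open SimpleGraph
open scoped Classical

/-- `H` embeds into `G`: there is an injective graph homomorphism from `H` to `G`. -/
def Copies {α : Type*} {β : Type*} (H : SimpleGraph α) (G : SimpleGraph β) : Prop :=
  ∃ f : α → β, Function.Injective f ∧ ∀ ⦃a b : α⦄, H.Adj a b → G.Adj (f a) (f b)

/-- the star `K_{1,ℓ}` with `ℓ` leaves and center `0`. -/
def starGraph (ℓ : ℕ) : SimpleGraph (Fin (ℓ + 1)) :=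
  SimpleGraph.fromRel (fun a _ => a = 0)

/-- the graph of color `i` for a symmetric edge-coloring `c`. -/
def colorGraph {N k : ℕ} (c : Fin N → Fin N → Fin k) (i : Fin k) : SimpleGraph (Fin N) :=
  SimpleGraph.fromRel (fun a b => c a b = i)

/-- `K_N → (G₁, G₂)`: every red-blue coloring of `E(K_N)` yields a red `G₁` or a blue `G₂`. -/
def RamseyProp2 {α β : Type*} (N : ℕ) (G₁ : SimpleGraph α) (G₂ : SimpleGraph β) : Prop :=
  ∀ R : SimpleGraph (Fin N), Copies G₁ R ∨ Copies G₂ Rᶜ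

/-- the 2-color Ramsey number `r(G₁, G₂)`. -/
noncomputable def ramsey2 {α β : Type*} (G₁ : SimpleGraph α) (G₂ : SimpleGraph β) : ℕ :=
  sInf {N | RamseyProp2 N G₁ G₂}

/-- `K_N → (G₁, G₂, G₃)` for 3-colorings. -/
def RamseyProp3 {α β γ : Type*} (N : ℕ) (G₁ : SimpleGraph α) (G₂ : SimpleGraph β)
    (G₃ : SimpleGraph γ) : Prop :=
  ∀ c : Fin N → Fin N → Fin 3, (∀ a b, c a b = c b a) →
    Copies G₁ (colorGraph c 0) ∨ Copies G₂ (colorGraph c 1) ∨ Copies G₃ (colorGraph c 2)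

/-- the 3-color Ramsey number `r(G₁, G₂, G₃)`. -/
noncomputable def ramsey3 {α β γ : Type*} (G₁ : SimpleGraph α) (G₂ : SimpleGraph β)
    (G₃ : SimpleGraph γ) : ℕ :=
  sInf {N | RamseyProp3 N G₁ G₂ G₃}

/-- the chromatic number as a natural number. -/
noncomputable def chrom {β : Type*} (H : SimpleGraph β) : ℕ :=
  sInf {k | H.Colorable k}

/-- the surplus `s(H)`: the minimum size of a color class over proper colorings of `H`
with `chrom H` colors. -/
noncomputable def surplus {β : Type*} [Fintype β] (H : SimpleGraph β) : ℕ :=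
  sInf {s | ∃ C : H.Coloring (Fin (chrom H)), ∃ i : Fin (chrom H),
    s = (Finset.univ.filter (fun v => C v = i)).card}

/-!
Lower bound: on `(t + 1)(n - 1) = ℓ + n - 2` vertices colour red the complete `(t + 1)`-partite
graph with parts of size `n - 1`. Every red degree is `t(n - 1) = ℓ - 1`, and the blue graph is a
disjoint union of copies of `K_{n-1}`, which contains no connected graph on `n` vertices.

Upper bound: on `ℓ + n - 1` vertices, either some vertex has red degree at least `ℓ`, or every
blue degree is at least `n - 1`. A graph of minimum degree at least `n - 1` contains every tree on
`n` vertices: embed the tree minus a leaf, then send the leaf to a neighbour of its parent's image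
lying outside the image.
-/

open Finset

namespace SimpleGraph

variable {V W : Type*} {G : SimpleGraph W}

lemma copies_iff_isContained {H : SimpleGraph V} : Copies H G ↔ H ⊑ G :=
  ⟨fun ⟨f, hf, hadj⟩ => ⟨⟨⟨f, fun h => hadj h⟩, hf⟩⟩,
    fun ⟨f⟩ => ⟨f, f.injective, fun _ _ h => f.toHom.map_adj h⟩⟩

lemma isContained_of_copy_induce_compl_singleton {T : SimpleGraph V} {v : V}
    (f : Copy (T.induce {v}ᶜ) G) {w : W} (hw : ∀ x, f x ≠ w)
    (hadj : ∀ x : ({v}ᶜ : Set V), T.Adj v x → G.Adj w (f x)) : T ⊑ G := by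
  let g (x : V) : W := if h : x = v then w else f ⟨x, h⟩
  have hgv : g v = w := dif_pos rfl
  have hg {x : V} (h : x ≠ v) : g x = f ⟨x, h⟩ := dif_neg h
  refine ⟨⟨⟨g, fun {x y} hxy => ?_⟩, fun x y (hxy : g x = g y) => ?_⟩⟩
  · by_cases hx : x = v <;> by_cases hy : y = v
    · exact absurd (hx.trans hy.symm) hxy.ne
    · subst hx
      rw [hgv, hg hy]
      exact hadj ⟨y, hy⟩ hxy
    · subst hy
      rw [hgv, hg hx]
      exact (hadj ⟨x, hx⟩ hxy.symm).symm
    · rw [hg hx, hg hy]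
      exact f.toHom.map_adj (show (T.induce {v}ᶜ).Adj ⟨x, hx⟩ ⟨y, hy⟩ from hxy)
  · by_cases hx : x = v <;> by_cases hy : y = v
    · exact hx.trans hy.symm
    · rw [hx, hgv, hg hy] at hxy
      exact absurd hxy.symm (hw _)
    · rw [hy, hgv, hg hx] at hxy
      exact absurd hxy (hw _)
    · rw [hg hx, hg hy] at hxy
      exact congrArg Subtype.val (f.injective hxy)

lemma starGraph_isContained_iff [Fintype V] [G.LocallyFinite] (r : V) :
    starGraph r ⊑ G ↔ ∃ w, Fintype.card V - 1 ≤ G.degree w := by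
  constructor
  · rintro ⟨f⟩
    exact ⟨f r, degree_starGraph_center (r := r) ▸ f.degree_le r⟩
  · rintro ⟨w, hw⟩
    obtain ⟨e⟩ : Nonempty (({r}ᶜ : Set V) ↪ G.neighborSet w) := by
      rw [Function.Embedding.nonempty_iff_card_le, card_neighborSet_eq_degree,
        Fintype.card_compl_set, Set.card_singleton]
      exact hw
    let f : Copy ((starGraph r).induce {r}ᶜ) G :=
      ⟨⟨fun x => e x, fun {x y} hxy =>
        absurd (starGraph_adj.1 hxy).2 (not_or.2 ⟨x.2, y.2⟩)⟩,
        fun x y hxy => e.injective (Subtype.ext hxy)⟩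
    exact isContained_of_copy_induce_compl_singleton f (fun x => (G.ne_of_adj (e x).2).symm)
      fun x _ => (e x).2

lemma exists_adj_forall_ne {α : Type*} [Fintype α] [G.LocallyFinite] (f : α → W) (a : α)
    (ha : Fintype.card α ≤ G.degree (f a)) : ∃ w, G.Adj (f a) w ∧ ∀ x, f x ≠ w := by
  by_contra! h
  have hsub : G.neighborFinset (f a) ⊆ (univ.erase a).image f := fun w hw => by
    obtain ⟨x, rfl⟩ := h w ((mem_neighborFinset _ _ _).1 hw)
    refine mem_image_of_mem f (mem_erase.2 ⟨fun hx => ?_, mem_univ _⟩)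
    exact G.irrefl (hx ▸ (mem_neighborFinset _ _ _).1 hw)
  have := (card_le_card hsub).trans card_image_le
  rw [card_erase_of_mem (mem_univ _), card_univ, card_neighborFinset_eq_degree] at this
  have := Fintype.card_pos_iff.2 ⟨a⟩
  omega

theorem IsTree.isContained_of_card_sub_one_le_degree [Fintype V] [Nonempty W] [G.LocallyFinite]
    {T : SimpleGraph V} (hT : T.IsTree) (hG : ∀ w, Fintype.card V - 1 ≤ G.degree w) :
    T ⊑ G := by
  obtain ⟨k, hk⟩ : ∃ k, Fintype.card V = k + 1 :=
    Nat.exists_eq_succ_of_ne_zero (Fintype.card_pos_iff.2 hT.connected.nonempty).ne'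
  induction k generalizing V with
  | zero =>
    have : Subsingleton V := Fintype.card_le_one_iff_subsingleton.1 hk.le
    obtain ⟨w⟩ := ‹Nonempty W›
    exact ⟨⟨⟨fun _ => w, fun h => absurd (Subsingleton.elim _ _) h.ne⟩,
      fun _ _ _ => Subsingleton.elim _ _⟩⟩
  | succ k ih =>
    have : Nontrivial V := Fintype.one_lt_card_iff_nontrivial.1 (by omega)
    obtain ⟨v, hv⟩ := hT.exists_vert_degree_one_of_nontrivial
    obtain ⟨u, hvu, hu⟩ := degree_eq_one_iff_existsUnique_adj.1 hv
    have hcard : Fintype.card ({v}ᶜ : Set V) = k + 1 := by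
      rw [Fintype.card_compl_set, Set.card_singleton, hk, Nat.add_sub_cancel]
    obtain ⟨f⟩ := ih ⟨hT.connected.induce_compl_singleton_of_degree_eq_one hv,
      hT.isAcyclic.induce _⟩ (fun w => by rw [hcard]; have := hG w; omega) hcard
    obtain ⟨w, hw, hwf⟩ :=
      exists_adj_forall_ne f ⟨u, hvu.ne.symm⟩ (by rw [hcard]; exact hk ▸ hG _)
    exact isContained_of_copy_induce_compl_singleton f hwf
      fun x hx => (Subtype.ext (hu x hx) : x = ⟨u, _⟩) ▸ hw.symm

lemma Reachable.eq_of_forall_adj {X : Type*} {T : SimpleGraph V} {F : V → X}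
    (hF : ∀ ⦃a b⦄, T.Adj a b → F a = F b) {u v : V} (h : T.Reachable u v) : F u = F v := by
  obtain ⟨p⟩ := h
  induction p with
  | nil => rfl
  | cons hadj _ ih => exact (hF hadj).trans ih

lemma Connected.not_isContained_compl_completeEquipartiteGraph [Fintype V] {T : SimpleGraph V}
    (hT : T.Connected) {r s : ℕ} (hs : s < Fintype.card V) :
    ¬T ⊑ (completeEquipartiteGraph r s)ᶜ := by
  rintro ⟨f⟩
  have hpart (x y : V) : (f x).1 = (f y).1 :=
    (hT x y).eq_of_forall_adj fun a b hab => by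
      simpa using ((compl_adj _ _ _).1 (f.toHom.map_adj hab)).2
  have hinj : Function.Injective fun x => (f x).2 := fun x y hxy =>
    f.injective (Prod.ext (hpart x y) hxy)
  simpa using (Fintype.card_le_of_injective _ hinj).trans_lt' hs

end SimpleGraph

open SimpleGraph

lemma ramseyProp2_iff {α β : Type*} {N : ℕ} {G₁ : SimpleGraph α} {G₂ : SimpleGraph β} :
    RamseyProp2 N G₁ G₂ ↔ ∀ R : SimpleGraph (Fin N), G₁ ⊑ R ∨ G₂ ⊑ Rᶜ := by
  simp only [RamseyProp2, copies_iff_isContained]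

lemma RamseyProp2.isContained_or {α β γ : Type*} [Fintype γ] {N : ℕ} {G₁ : SimpleGraph α}
    {G₂ : SimpleGraph β} (h : RamseyProp2 N G₁ G₂) (hN : N ≤ Fintype.card γ)
    (R : SimpleGraph γ) : G₁ ⊑ R ∨ G₂ ⊑ Rᶜ := by
  obtain ⟨e⟩ : Nonempty (Fin N ↪ γ) :=
    Function.Embedding.nonempty_of_card_le (by rwa [Fintype.card_fin])
  have hcompl : (R.comap e)ᶜ ≤ Rᶜ.comap e := fun a b hab =>
    ⟨e.injective.ne hab.1, hab.2⟩
  exact (ramseyProp2_iff.1 h (R.comap e)).imp (·.trans (Embedding.comap e R).isContained)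
    fun h => (h.mono_right hcompl).trans (Embedding.comap e Rᶜ).isContained

theorem ramseyProp2_starGraph_of_isTree {β : Type*} [Fintype β] {T : SimpleGraph β}
    (hT : T.IsTree) {ℓ : ℕ} (hℓ : 0 < ℓ) :
    RamseyProp2 (ℓ + Fintype.card β - 1) (_root_.starGraph ℓ) T := by
  have := Fintype.card_pos_iff.2 hT.connected.nonempty
  have : Nonempty (Fin (ℓ + Fintype.card β - 1)) := ⟨⟨0, by omega⟩⟩
  refine ramseyProp2_iff.2 fun R => ?_
  by_cases hred : ∃ v, ℓ ≤ R.degree v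
  · obtain ⟨v, hv⟩ := hred
    exact .inl ((starGraph_isContained_iff 0).2 ⟨v, by simpa using hv⟩)
  · right
    push Not at hred
    refine hT.isContained_of_card_sub_one_le_degree fun v => ?_
    rw [degree_compl, Fintype.card_fin]
    have := hred v
    omega

theorem not_ramseyProp2_starGraph {β : Type*} [Fintype β] {T : SimpleGraph β}
    (hT : T.Connected) {t ℓ N : ℕ} (hℓ : t * (Fintype.card β - 1) < ℓ)
    (hN : N ≤ (t + 1) * (Fintype.card β - 1)) : ¬RamseyProp2 N (_root_.starGraph ℓ) T := by
  have := Fintype.card_pos_iff.2 hT.nonempty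
  intro h
  rcases h.isContained_or (by simpa using hN)
    (completeEquipartiteGraph (t + 1) (Fintype.card β - 1)) with hred | hblue
  · obtain ⟨w, hw⟩ := (starGraph_isContained_iff 0).1 hred
    simp only [degree_completeEquipartiteGraph, Fintype.card_fin, Nat.add_sub_cancel] at hw
    omega
  · exact hT.not_isContained_compl_completeEquipartiteGraph (by omega) hblue

theorem stmt5_general (t n ℓ : ℕ) (hℓ : ℓ = t * (n - 1) + 1)
    (T : SimpleGraph (Fin n)) (hT : T.IsTree) :
    ramsey2 (_root_.starGraph ℓ) T = ℓ + n - 1 := by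
  have hcard : Fintype.card (Fin n) = n := Fintype.card_fin n
  refine IsLeast.csInf_eq ⟨?_, fun N hN => ?_⟩
  · simpa [hcard] using ramseyProp2_starGraph_of_isTree hT (ℓ := ℓ) (by omega)
  · by_contra! hlt
    have hmul : (t + 1) * (n - 1) = t * (n - 1) + (n - 1) := Nat.succ_mul _ _
    exact not_ramseyProp2_starGraph hT.connected (t := t) (by rw [hcard]; omega)
      (by rw [hcard]; omega) hN

theorem stmt5 (t n ℓ : ℕ) (hn : 2 ≤ n) (hℓ : ℓ = t * (n - 1) + 1)
    (T : SimpleGraph (Fin n)) (hT : T.IsTree) :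
    ramsey2 (_root_.starGraph ℓ) T = ℓ + n - 1 :=
  stmt5_general t n ℓ hℓ T hT
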